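/- arXiv:2010.05087 — 9 statements merged into one kernel-verified Lean document; each statement's English description precedes it below -/
import Mathlib

section
/- For all real numbers a > 0, b > 0, k > 1, and Δ with a/k + Δ ≥ 0 and a ≥ a/k + Δ, the inequality (a/(a+b) - (a+Δk)/(a+Δk+b)) + (k-1)·(a/(a+b) - (a - a/k - Δ)/(a - a/k - Δ + b - b/k)) ≥ 0 holds. -/
/-!
With `S = a + b`, `T = S + kΔ` and `D = a - a/k - Δ + b - b/k`, the two brackets are
`-b k Δ / (S T)` and `b Δ / (S D)`. Since `k D = (k - 1) S - k Δ`, we get `(k - 1) T - k D = k² Δ`,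
so the terms linear in `Δ` cancel and the whole expression is `b (k Δ)² / (S T D) ≥ 0`.
-/

theorem current_share_loss_eq {a b k Δ : ℝ} (hS : a + b ≠ 0) (hT : a + Δ * k + b ≠ 0) :
    a / (a + b) - (a + Δ * k) / (a + Δ * k + b) =
      -(b * (k * Δ)) / ((a + b) * (a + Δ * k + b)) := by
  rw [div_sub_div _ _ hS hT]
  ring

theorem continuation_share_loss_eq {a b k Δ : ℝ} (hS : a + b ≠ 0)
    (hD : a - a / k - Δ + b - b / k ≠ 0) :
    a / (a + b) - (a - a / k - Δ) / (a - a / k - Δ + b - b / k) =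
      b * Δ / ((a + b) * (a - a / k - Δ + b - b / k)) := by
  rw [div_sub_div _ _ hS hD]
  ring

theorem deviation_loss_eq {a b k Δ : ℝ} (hk : k ≠ 0) (hS : a + b ≠ 0)
    (hT : a + Δ * k + b ≠ 0) (hD : a - a / k - Δ + b - b / k ≠ 0) :
    (a / (a + b) - (a + Δ * k) / (a + Δ * k + b)) +
        (k - 1) * (a / (a + b) - (a - a / k - Δ) / (a - a / k - Δ + b - b / k)) =
      b * (k * Δ) ^ 2 / ((a + b) * (a + Δ * k + b) * (a - a / k - Δ + b - b / k)) := by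
  rw [current_share_loss_eq hS hT, continuation_share_loss_eq hS hD]
  have hkD : k * (a - a / k - Δ + b - b / k) = (k - 1) * (a + b) - k * Δ := by
    field_simp
    ring
  generalize a - a / k - Δ + b - b / k = D at hD hkD ⊢
  rw [mul_div_assoc', div_add_div _ _ (mul_ne_zero hS hT) (mul_ne_zero hS hD),
    div_eq_div_iff (by simp [*]) (by simp [*])]
  linear_combination (-(a + b) ^ 2 * (a + Δ * k + b) * D * b * Δ) * hkD

theorem stmt_0_general (a b k Δ : ℝ) (hb : 0 < b) (hk : 1 < k)
    (h1 : 0 ≤ a / k + Δ) (h2 : a / k + Δ ≤ a) :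
    (a / (a + b) - (a + Δ * k) / (a + Δ * k + b)) +
      (k - 1) * (a / (a + b) - (a - a / k - Δ) / (a - a / k - Δ + b - b / k)) ≥ 0 := by
  have hk0 : 0 < k := by linarith
  have hS : 0 < a + b := by linarith
  have hT : 0 < a + Δ * k + b := by
    have : a + Δ * k = k * (a / k + Δ) := by field_simp
    nlinarith
  have hD : 0 < a - a / k - Δ + b - b / k := by
    have : b / k < b := div_lt_self hb hk
    linarith
  rw [deviation_loss_eq hk0.ne' hS.ne' hT.ne' hD.ne']
  positivity

theorem stmt_0 (a b k Δ : ℝ) (ha : 0 < a) (hb : 0 < b) (hk : 1 < k)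
    (h1 : 0 ≤ a / k + Δ) (h2 : a / k + Δ ≤ a) :
    (a / (a + b) - (a + Δ * k) / (a + Δ * k + b)) +
      (k - 1) * (a / (a + b) - (a - a / k - Δ) / (a - a / k - Δ + b - b / k)) ≥ 0 :=
  stmt_0_general a b k Δ hb hk h1 h2
end

section
/- Let α > 0, k > 0, and let w_i > 0 and S > 0 be real numbers. Define g(w) = k·w^α/(w^α + k^α·S) and f(w) = w^α/(w^α + S). Then g'(k·w_i) = f'(w_i); that is, the marginal gain from spending in a k-value battle at the proportional spend k·w_i equals the marginal gain from spending in a 1-value battle at spend w_i. -/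
/-! The k-value battle is the 1-value battle rescaled in both axes: for `w > 0`,
`g w = k * f (w / k)`, because `(w / k) ^ α = w ^ α / k ^ α`. Differentiating the rescaling at
`w = k * wᵢ`, the outer factor `k` and the inner factor `k⁻¹` cancel. -/

open Filter Topology

theorem deriv_mul_comp_inv_mul {𝕜 : Type*} [NontriviallyNormedField 𝕜] (f : 𝕜 → 𝕜) {k : 𝕜}
    (hk : k ≠ 0) (x : 𝕜) : deriv (fun w => k * f (k⁻¹ * w)) (k * x) = deriv f x := by
  rw [deriv_const_mul_field, deriv_comp_mul_left k⁻¹ f (k * x), inv_mul_cancel_left₀ hk,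
    smul_eq_mul, mul_inv_cancel_left₀ hk]

theorem Real.mul_rpow_div_rpow_add_eq {k w : ℝ} (hk : 0 < k) (hw : 0 ≤ w) (α S : ℝ) :
    k * w ^ α / (w ^ α + k ^ α * S) = k * ((k⁻¹ * w) ^ α / ((k⁻¹ * w) ^ α + S)) := by
  have hkα : k ^ α ≠ 0 := (Real.rpow_pos_of_pos hk α).ne'
  rw [inv_mul_eq_div, Real.div_rpow hw hk.le, div_add' _ _ _ hkα, div_div_div_cancel_right₀ hkα,
    mul_div_assoc, mul_comm S]

theorem stmt_3_general (α k S wi : ℝ) (hk : 0 < k) (hwi : 0 < wi) :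
    deriv (fun w : ℝ => k * w ^ α / (w ^ α + k ^ α * S)) (k * wi) =
      deriv (fun w : ℝ => w ^ α / (w ^ α + S)) wi := by
  have hrescale : (fun w : ℝ => k * w ^ α / (w ^ α + k ^ α * S)) =ᶠ[𝓝 (k * wi)]
      fun w => k * ((k⁻¹ * w) ^ α / ((k⁻¹ * w) ^ α + S)) := by
    filter_upwards [lt_mem_nhds (mul_pos hk hwi)] with w hw
    exact Real.mul_rpow_div_rpow_add_eq hk hw.le α S
  rw [hrescale.deriv_eq, deriv_mul_comp_inv_mul (fun w : ℝ => w ^ α / (w ^ α + S)) hk.ne']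

theorem stmt_3 (α k S wi : ℝ) (hα : 0 < α) (hk : 0 < k) (hwi : 0 < wi) (hS : 0 < S) :
    deriv (fun w : ℝ => k * w ^ α / (w ^ α + k ^ α * S)) (k * wi) =
      deriv (fun w : ℝ => w ^ α / (w ^ α + S)) wi :=
  stmt_3_general α k S wi hk hwi
end

section
/- Fix α > 0, k > 0, S > 0 and a total budget decomposed as spending w₁ ≥ 0 on a 1-value battle and w_k ≥ 0 on a k-value battle with w₁ + w_k = C for a constant C > 0. The function (w₁, w_k) ↦ w₁^α/(w₁^α + S) + k·w_k^α/(w_k^α + k^α·S) restricted to w₁ + w_k = C, with C = (1+k)·w for some w > 0, is maximized at w₁ = w and w_k = k·w, provided α ≤ 1. -/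
/-!
Write `f x = x ^ α / (x ^ α + S)`. Since `(x / k) ^ α = x ^ α / k ^ α`, the value of the `k`-battle
is `k * f (wk / k)`, so the payoff is `f w₁ + k * f (wk / k)`. For `α ≤ 1` the function `f` is
concave on `[0, ∞)`, being the concave increasing map `u ↦ u / (u + S)` after the concave map
`x ↦ x ^ α`. Jensen's inequality with weights `1 : k` then bounds the payoff by `(1 + k) * f w`,
because `(w₁ + k * (wk / k)) / (1 + k) = w`.
-/

open Set Real

theorem ConcaveOn.comp_of_mapsTo {s t : Set ℝ} {f g : ℝ → ℝ} (hg : ConcaveOn ℝ t g)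
    (hf : ConcaveOn ℝ s f) (hg' : MonotoneOn g t) (hst : MapsTo f s t) :
    ConcaveOn ℝ s (g ∘ f) := by
  refine ⟨hf.1, fun x hx y hy a b ha hb hab => ?_⟩
  have hcomb : a • f x + b • f y ∈ t := hg.1 (hst hx) (hst hy) ha hb hab
  calc a • g (f x) + b • g (f y) ≤ g (a • f x + b • f y) := hg.2 (hst hx) (hst hy) ha hb hab
    _ ≤ g (f (a • x + b • y)) := hg' hcomb (hst (hf.1 hx hy ha hb hab)) (hf.2 hx hy ha hb hab)

theorem ConcaveOn.mul_add_mul_le {s : Set ℝ} {g : ℝ → ℝ} (hg : ConcaveOn ℝ s g) {x y a b : ℝ}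
    (hx : x ∈ s) (hy : y ∈ s) (ha : 0 < a) (hb : 0 < b) :
    a * g x + b * g y ≤ (a + b) * g ((a * x + b * y) / (a + b)) := by
  have hab : 0 < a + b := add_pos ha hb
  have key := hg.2 hx hy (div_pos ha hab).le (div_pos hb hab).le (by field_simp)
  simp only [smul_eq_mul] at key
  calc a * g x + b * g y = (a + b) * (a / (a + b) * g x + b / (a + b) * g y) := by field_simp
    _ ≤ (a + b) * g (a / (a + b) * x + b / (a + b) * y) := by gcongr
    _ = (a + b) * g ((a * x + b * y) / (a + b)) := by congr 2; field_simp

theorem concaveOn_div_add {S : ℝ} (hS : 0 < S) : ConcaveOn ℝ (Ici 0) (fun u : ℝ => u / (u + S)) := by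
  refine ⟨convex_Ici 0, fun x (hx : 0 ≤ x) y (hy : 0 ≤ y) a b ha hb hab => ?_⟩
  obtain rfl : b = 1 - a := by linarith
  simp only [smul_eq_mul]
  rw [mul_div_assoc', mul_div_assoc', div_add_div _ _ (by positivity) (by positivity),
    div_le_div_iff₀ (by positivity) (by nlinarith)]
  nlinarith [mul_nonneg (mul_nonneg ha hb) (mul_nonneg hS.le (sq_nonneg (x - y)))]

theorem monotoneOn_div_add {S : ℝ} (hS : 0 < S) :
    MonotoneOn (fun u : ℝ => u / (u + S)) (Ici 0) := by
  intro x (hx : 0 ≤ x) y (hy : 0 ≤ y) hxy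
  rw [div_le_div_iff₀ (by positivity) (by positivity)]
  nlinarith

theorem concaveOn_rpow_div_rpow_add {α S : ℝ} (hα : 0 ≤ α) (hα1 : α ≤ 1) (hS : 0 < S) :
    ConcaveOn ℝ (Ici 0) (fun x : ℝ => x ^ α / (x ^ α + S)) :=
  (concaveOn_div_add hS).comp_of_mapsTo (concaveOn_rpow hα hα1) (monotoneOn_div_add hS)
    fun _ hx => rpow_nonneg hx α

theorem mul_rpow_div_rpow_add_mul_rpow {α k S x : ℝ} (hk : 0 < k) (hx : 0 ≤ x) :
    k * x ^ α / (x ^ α + k ^ α * S) = k * ((x / k) ^ α / ((x / k) ^ α + S)) := by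
  have hkα : 0 < k ^ α := rpow_pos_of_pos hk α
  rw [div_rpow hx hk.le, mul_div_assoc]
  congr 1
  field_simp

theorem stmt_6 (α k S w : ℝ) (hα : 0 < α) (hα1 : α ≤ 1) (hk : 0 < k) (hS : 0 < S)
    (hw : 0 < w) :
    ∀ w₁ wk : ℝ, 0 ≤ w₁ → 0 ≤ wk → w₁ + wk = (1 + k) * w →
      w₁ ^ α / (w₁ ^ α + S) + k * wk ^ α / (wk ^ α + k ^ α * S) ≤
        w ^ α / (w ^ α + S) + k * (k * w) ^ α / ((k * w) ^ α + k ^ α * S) := by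
  intro w₁ wk hw₁ hwk hsum
  rw [mul_rpow_div_rpow_add_mul_rpow hk hwk,
    mul_rpow_div_rpow_add_mul_rpow hk (mul_nonneg hk.le hw.le), mul_div_cancel_left₀ w hk.ne']
  have hmean : (1 * w₁ + k * (wk / k)) / (1 + k) = w := by
    field_simp
    linarith
  have jensen := (concaveOn_rpow_div_rpow_add hα.le hα1 hS).mul_add_mul_le
    (mem_Ici.2 hw₁) (mem_Ici.2 (div_nonneg hwk hk.le)) one_pos hk
  rw [hmean] at jensen
  linarith
end

section
/- Consider two players A and B with budget 100 each and three identical battles with Tullock contest success function p = w_A/(w_A + w_B). Suppose after the first battle (won by A, with realized spendings w_A¹, w_B¹ < 100), in the final battle both spend all remaining budget. Then the pair (w_A², w_B²) with w_A² = (100 - w_A¹)/2 and w_B² = (100 - w_B¹)/2 is a critical point of A's winning probability v_A = p² + (1-p²)·p³ with respect to (w_A², w_B²), where p² = w_A²/(w_A²+w_B²) and p³ = (100-w_A¹-w_A²)/(200-w_A¹-w_A²-w_B¹-w_B²). -/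
/-!
After battle one, A loses overall only by losing both remaining battles, so
`v_A = 1 - (1 - p²) (1 - p³)`. Replacing each player's spending `w²` in battle two by the
remaining budget minus `w²` exchanges battles two and three and so leaves `v_A` unchanged.
Hence, in each variable separately, `v_A` is symmetric about half the remaining budget, and a
function symmetric about a point has derivative zero there.
-/

theorem deriv_half_eq_zero_of_comp_const_sub_eq {f : ℝ → ℝ} {c : ℝ}
    (hf : ∀ t, f (c - t) = f t) : deriv f (c / 2) = 0 := by
  have h := deriv_comp_const_sub (f := f) (a := c) (x := c / 2)
  simp only [hf, show c - c / 2 = c / 2 by ring] at h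
  linarith

namespace Tullock

noncomputable def winProb (a b : ℝ) : ℝ := a / (a + b)

/-- A's probability of winning at least one of two battles when, out of the remaining budgets
`x` and `y`, the players spend `a` and `b` in the first and the rest in the second. -/
noncomputable def winAtLeastOnce (x y a b : ℝ) : ℝ :=
  1 - (1 - winProb a b) * (1 - winProb (x - a) (y - b))

theorem winAtLeastOnce_sub_sub (x y a b : ℝ) :
    winAtLeastOnce x y (x - a) (y - b) = winAtLeastOnce x y a b := by
  simp only [winAtLeastOnce, sub_sub_cancel]
  ring

theorem deriv_winAtLeastOnce_left (x y : ℝ) :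
    deriv (fun a => winAtLeastOnce x y a (y / 2)) (x / 2) = 0 :=
  deriv_half_eq_zero_of_comp_const_sub_eq fun a => by
    simpa only [show y - y / 2 = y / 2 by ring] using winAtLeastOnce_sub_sub x y a (y / 2)

theorem deriv_winAtLeastOnce_right (x y : ℝ) :
    deriv (fun b => winAtLeastOnce x y (x / 2) b) (y / 2) = 0 :=
  deriv_half_eq_zero_of_comp_const_sub_eq fun b => by
    simpa only [show x - x / 2 = x / 2 by ring] using winAtLeastOnce_sub_sub x y (x / 2) b

end Tullock

open Tullock in
theorem stmt_7_general (wA1 wB1 : ℝ) :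
    let v : ℝ → ℝ → ℝ := fun a b =>
      a / (a + b) + (1 - a / (a + b)) *
        ((100 - wA1 - a) / (200 - wA1 - a - wB1 - b))
    let a0 : ℝ := (100 - wA1) / 2
    let b0 : ℝ := (100 - wB1) / 2
    deriv (fun a => v a b0) a0 = 0 ∧ deriv (fun b => v a0 b) b0 = 0 := by
  intro v a0 b0
  have hv : v = winAtLeastOnce (100 - wA1) (100 - wB1) := by
    funext a b
    simp only [v, winAtLeastOnce, winProb]
    ring
  rw [hv]
  exact ⟨deriv_winAtLeastOnce_left _ _, deriv_winAtLeastOnce_right _ _⟩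

theorem stmt_7 (wA1 wB1 : ℝ) (hA1 : 0 < wA1) (hA1' : wA1 < 100)
    (hB1 : 0 < wB1) (hB1' : wB1 < 100) :
    let v : ℝ → ℝ → ℝ := fun a b =>
      a / (a + b) + (1 - a / (a + b)) *
        ((100 - wA1 - a) / (200 - wA1 - a - wB1 - b))
    let a0 : ℝ := (100 - wA1) / 2
    let b0 : ℝ := (100 - wB1) / 2
    deriv (fun a => v a b0) a0 = 0 ∧ deriv (fun b => v a0 b) b0 = 0 :=
  stmt_7_general wA1 wB1
end

section
/- Let f(x,y) = (x-100)·(x² + 3x(y-100) - 100y) / ((x+y-200)²·(x+y)) for 0 < x, y < 100. Then (x,y) = (100/3, 100/3) satisfies ∂f/∂x = 0 and ∂f/∂y = 0. -/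
/-!
At the symmetric point `x = y = 100/3`, the numerator and the denominator of `f` are each
stationary in either variable, so the quotient rule gives zero. The denominator depends on
`s = x + y` only, as `(s - 200)² s`, whose derivative `(s - 200)(3s - 200)` vanishes at
`s = 200/3`; in `y` the numerator is even constant, because its `y`-coefficient is a multiple
of `3x - 100`.
-/

theorem HasDerivAt.fun_div_of_zero {𝕜 : Type*} [NontriviallyNormedField 𝕜] {f g : 𝕜 → 𝕜}
    {a : 𝕜} (hf : HasDerivAt f 0 a) (hg : HasDerivAt g 0 a) (hga : g a ≠ 0) :
    HasDerivAt (fun x => f x / g x) 0 a := by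
  simpa using hf.fun_div hg hga

theorem hasDerivAt_sub_sq_mul_self_of_three_mul_eq {b s : ℝ} (hs : 3 * s = b) :
    HasDerivAt (fun t => (t - b) ^ 2 * t) 0 s := by
  refine (((hasDerivAt_id s).sub_const b).pow 2 |>.mul (hasDerivAt_id s)).congr_deriv ?_
  simp only [Pi.pow_apply, id, ← hs]
  ring

theorem hasDerivAt_sub_mul_quadratic_at_third (m : ℝ) :
    HasDerivAt (fun x => (x - m) * (x ^ 2 + 3 * x * (m / 3 - m) - m * (m / 3))) 0 (m / 3) := by
  have hquad := (((hasDerivAt_id (m / 3)).pow 2).add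
    (((hasDerivAt_id _).const_mul 3).mul_const (m / 3 - m))).sub_const (m * (m / 3))
  refine (((hasDerivAt_id _).sub_const m).mul hquad).congr_deriv ?_
  simp only [Pi.pow_apply, Pi.add_apply, id]
  ring

theorem hasDerivAt_const_mul_affine_of_third (m y₀ : ℝ) :
    HasDerivAt (fun y => (m / 3 - m) * ((m / 3) ^ 2 + 3 * (m / 3) * (y - m) - m * y)) 0 y₀ := by
  have hconst : (fun y => (m / 3 - m) * ((m / 3) ^ 2 + 3 * (m / 3) * (y - m) - m * y)) =
      fun _ => (m / 3 - m) * ((m / 3) ^ 2 - m ^ 2) := by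
    funext y
    ring
  rw [hconst]
  exact hasDerivAt_const y₀ _

theorem stmt_8 :
    let f : ℝ → ℝ → ℝ := fun x y =>
      (x - 100) * (x ^ 2 + 3 * x * (y - 100) - 100 * y) /
        ((x + y - 200) ^ 2 * (x + y))
    deriv (fun x => f x (100 / 3)) (100 / 3) = 0 ∧
      deriv (fun y => f (100 / 3) y) (100 / 3) = 0 := by
  intro f
  have hden : HasDerivAt (fun s : ℝ => (s - 200) ^ 2 * s) 0 (100 / 3 + 100 / 3) :=
    hasDerivAt_sub_sq_mul_self_of_three_mul_eq (by norm_num)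
  have hden_ne : ((100 : ℝ) / 3 + 100 / 3 - 200) ^ 2 * (100 / 3 + 100 / 3) ≠ 0 := by norm_num
  exact ⟨((hasDerivAt_sub_mul_quadratic_at_third 100).fun_div_of_zero
      (hden.comp_add_const _ _) hden_ne).deriv,
    ((hasDerivAt_const_mul_affine_of_third 100 _).fun_div_of_zero
      (hden.comp_const_add _ _) hden_ne).deriv⟩
end

section
/- Consider two players with budget 100 each in a contest with battle values (2,1,1,1) and Tullock success function, where after the first battle both players split their remaining budgets equally over the three 1-value battles. Then A's winning probability as a function of first-battle spendings x = w_A¹, y = w_B¹ equals (x-100)·(x³ + 4x²(y-125) + x(3y² - 1100y + 70000) + 10000y) / ((x+y-200)³·(x+y)), for 0 < x, y < 100. -/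
theorem stmt_10 (x y : ℝ) (hx : 0 < x) (hx' : x < 100) (hy : 0 < y) (hy' : y < 100) :
    let p1 : ℝ := x / (x + y)
    let p : ℝ := (100 - x) / (200 - x - y)
    p1 * (p + (1 - p) * p + (1 - p) * (1 - p) * p) + (1 - p1) * p * p * p =
      (x - 100) *
          (x ^ 3 + 4 * x ^ 2 * (y - 125) + x * (3 * y ^ 2 - 1100 * y + 70000) +
            10000 * y) /
        ((x + y - 200) ^ 3 * (x + y)) := by
  intro p1 p
  have h1 : x + y ≠ 0 := by positivity
  have h2 : (200 : ℝ) - x - y ≠ 0 := by nlinarith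
  have h3 : x + y - 200 ≠ 0 := by nlinarith
  simp only [p1, p]
  field_simp
  ring
end

section
/- Let g(x,y) = (x-100)·(x³ + 4x²(y-125) + x(3y² - 1100y + 70000) + 10000y) / ((x+y-200)³·(x+y)) for 0 < x, y < 100. Then (x,y) = (50,50) satisfies ∂g/∂x = 0 and ∂g/∂y = 0. -/
/-! The partial derivatives of the quotient `p / q` vanish where `p' q = p q'`. At `(50, 50)` one
has `p = -5·10⁷` and `q = -10⁸`, while in either variable `p' = 10⁶` and `q' = 2·10⁶`. -/

theorem deriv_div_eq_zero_of_mul_eq {𝕜 : Type*} [NontriviallyNormedField 𝕜] {f g : 𝕜 → 𝕜}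
    {a : 𝕜} (hf : DifferentiableAt 𝕜 f a) (hg : DifferentiableAt 𝕜 g a) (hga : g a ≠ 0)
    (h : deriv f a * g a = f a * deriv g a) : deriv (fun x => f x / g x) a = 0 := by
  rw [deriv_fun_div hf hg hga, h, sub_self, zero_div]

theorem stmt_11 :
    let g : ℝ → ℝ → ℝ := fun x y =>
      (x - 100) *
          (x ^ 3 + 4 * x ^ 2 * (y - 125) + x * (3 * y ^ 2 - 1100 * y + 70000) +
            10000 * y) /
        ((x + y - 200) ^ 3 * (x + y))
    deriv (fun x => g x 50) 50 = 0 ∧ deriv (fun y => g 50 y) 50 = 0 := by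
  intro g
  constructor <;>
  · refine deriv_div_eq_zero_of_mul_eq (by fun_prop) (by fun_prop) (by norm_num) ?_
    simp (disch := fun_prop) only [deriv_fun_mul, deriv_fun_add, deriv_fun_sub, deriv_fun_pow,
      deriv_id'', deriv_const']
    norm_num
end

section
/- Let a ≥ 0, b > 0, k > 1, Δ ∈ ℝ with a/k + Δ ≥ 0 and a/k + Δ ≤ a. Suppose player i spends a/k + Δ on the current battle (of value x > 0) while opponents spend b/k in total, and thereafter all players (including i) spend proportionally, so that i's remaining-budget share is (a - a/k - Δ)/((a - a/k - Δ) + (b - b/k)). Then i's total expected value under Tullock success probabilities, x·(a + Δk)/(a + Δk + b) + (k-1)x·(a - a/k - Δ)/(a - a/k - Δ + b - b/k), is maximized over Δ at Δ = 0, where it equals x·k·a/(a+b). -/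
/-! The Tullock share `u ↦ u / (u + b)` is concave, so it lies below its tangent line at `a`.
Write `t = Δ k`. Rescaling the second battle's spends by `k / (k - 1)` turns the payoff into
`x (g (a + t) + (k - 1) g (a - t / (k - 1)))` with `g u = u / (u + b)`; the two tangent-line
errors in `t` cancel, leaving at most `x k g a`. -/

theorem div_add_le_tangent {u v b : ℝ} (hb : 0 ≤ b) (hu : 0 < u + b) (hv : 0 < v + b) :
    u / (u + b) ≤ v / (v + b) + b / (v + b) ^ 2 * (u - v) := by
  have gap : v / (v + b) + b / (v + b) ^ 2 * (u - v) - u / (u + b) =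
      b * (u - v) ^ 2 / ((u + b) * (v + b) ^ 2) := by
    field_simp
    ring
  have : 0 ≤ b * (u - v) ^ 2 / ((u + b) * (v + b) ^ 2) := by positivity
  linarith

theorem div_add_add_mul_div_le {a b t w : ℝ} (hb : 0 ≤ b) (hw : 0 < w) (ha : 0 < a + b)
    (h₁ : 0 < a + t + b) (h₂ : 0 < a - t / w + b) :
    (a + t) / (a + t + b) + w * ((a - t / w) / (a - t / w + b)) ≤ (1 + w) * (a / (a + b)) := by
  have tangent₁ := div_add_le_tangent hb h₁ ha
  have tangent₂ := div_add_le_tangent hb h₂ ha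
  have cancel : w * (b / (a + b) ^ 2 * (a - t / w - a)) = -(b / (a + b) ^ 2 * (a + t - a)) := by
    field_simp
    ring
  have weighted₂ := mul_le_mul_of_nonneg_left tangent₂ hw.le
  linarith

theorem sub_div_div_sub_div_eq {a b k Δ : ℝ} (hk : 1 < k) :
    (a - a / k - Δ) / (a - a / k - Δ + b - b / k) =
      (a - Δ * k / (k - 1)) / (a - Δ * k / (k - 1) + b) := by
  have hk₀ : k ≠ 0 := by positivity
  have hk₁ : k - 1 ≠ 0 := by linarith
  have hc : (k - 1) / k ≠ 0 := div_ne_zero hk₁ hk₀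
  have hnum : a - a / k - Δ = (k - 1) / k * (a - Δ * k / (k - 1)) := by
    field_simp
  have hden : a - a / k - Δ + b - b / k = (k - 1) / k * (a - Δ * k / (k - 1) + b) := by
    field_simp
    ring
  rw [hden, hnum, mul_div_mul_left _ _ hc]

theorem stmt_16 (a b k x : ℝ) (ha : 0 ≤ a) (hb : 0 < b) (hk : 1 < k) (hx : 0 < x) :
    let F : ℝ → ℝ := fun Δ =>
      x * (a + Δ * k) / (a + Δ * k + b) +
        (k - 1) * x * ((a - a / k - Δ) / (a - a / k - Δ + b - b / k))
    (∀ Δ : ℝ, 0 ≤ a / k + Δ → a / k + Δ ≤ a → F Δ ≤ x * k * a / (a + b)) ∧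
      F 0 = x * k * a / (a + b) := by
  intro F
  have hk₀ : 0 < k := by linarith
  have hF : ∀ Δ, F Δ = x * ((a + Δ * k) / (a + Δ * k + b) +
      (k - 1) * ((a - Δ * k / (k - 1)) / (a - Δ * k / (k - 1) + b))) := fun Δ => by
    simp only [F, sub_div_div_sub_div_eq hk]
    ring
  have hmax : x * k * a / (a + b) = x * ((1 + (k - 1)) * (a / (a + b))) := by ring
  refine ⟨fun Δ h₁ h₂ => ?_, ?_⟩
  · have hscale : a + Δ * k = k * (a / k + Δ) := by field_simp
    have hu₁ : 0 ≤ a + Δ * k := hscale ▸ mul_nonneg hk₀.le h₁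
    have hu₂ : 0 ≤ a - Δ * k / (k - 1) := by
      rw [sub_nonneg, div_le_iff₀ (by linarith)]
      nlinarith
    rw [hF, hmax]
    gcongr
    exact div_add_add_mul_div_le hb.le (by linarith) (by linarith) (by linarith) (by linarith)
  · rw [hF, hmax]
    simp only [zero_mul, add_zero, zero_div, sub_zero]
    ring
end

section
/- For any real numbers a > 0, b > 0, and k > 1, and any Δ ≠ 0 with 0 ≤ a/k + Δ < a, the deviator's total expected share (a + Δk)/(a + Δk + b)·(1/k) + ((k-1)/k)·(a - a/k - Δ)/(a - a/k - Δ + b - b/k) is strictly less than a/(a+b). -/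
/-! With `g t = t / (t + b)`, `u = a + Δ k` and `v = a - Δ k / (k - 1)`, the deviator's share is
the convex combination `(1/k) g(u) + ((k-1)/k) g(v)`, whose barycentre `(1/k) u + ((k-1)/k) v` is `a`.
Since `g` is strictly concave and `u ≠ v` for `Δ ≠ 0`, this is strictly below `g a = a / (a + b)`. -/

open Set

theorem strictConcaveOn_div_add_const {𝕜 : Type*} [Field 𝕜] [LinearOrder 𝕜]
    [IsStrictOrderedRing 𝕜] {b : 𝕜} (hb : 0 < b) :
    StrictConcaveOn 𝕜 (Ioi (-b)) fun t => t / (t + b) := by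
  refine ⟨convex_Ioi _, fun x hx y hy hxy p q hp hq hpq => ?_⟩
  simp only [mem_Ioi, smul_eq_mul] at hx hy ⊢
  have hxb : 0 < x + b := by linarith
  have hyb : 0 < y + b := by linarith
  have hmb : 0 < p * x + q * y + b := by
    have : p * x + q * y + b = p * (x + b) + q * (y + b) := by linear_combination (-b) * hpq
    rw [this]; positivity
  have hsq : 0 < (x - y) ^ 2 := sq_pos_of_ne_zero (sub_ne_zero.2 hxy)
  have gap : (p * x + q * y) / (p * x + q * y + b) - (p * (x / (x + b)) + q * (y / (y + b)))
      = p * q * b * (x - y) ^ 2 / ((x + b) * (y + b) * (p * x + q * y + b)) := by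
    obtain rfl : q = 1 - p := by linarith
    field_simp
    ring
  have : 0 < p * q * b * (x - y) ^ 2 / ((x + b) * (y + b) * (p * x + q * y + b)) := by positivity
  linarith

theorem stmt_17_general (a b k Δ : ℝ) (hb : 0 < b) (hk : 1 < k)
    (hΔ : Δ ≠ 0) (h1 : 0 ≤ a / k + Δ) (h2 : a / k + Δ < a) :
    (a + Δ * k) / (a + Δ * k + b) * (1 / k) +
        (k - 1) / k * ((a - a / k - Δ) / (a - a / k - Δ + b - b / k)) <
      a / (a + b) := by
  have hk0 : 0 < k := by linarith
  have hk1 : k - 1 ≠ 0 := by linarith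
  have hw : 0 < (k - 1) / k := div_pos (by linarith) hk0
  set v := a - Δ * k / (k - 1) with hv_def
  have hnum : a - a / k - Δ = (k - 1) / k * v := by rw [hv_def]; field_simp
  have hden : a - a / k - Δ + b - b / k = (k - 1) / k * (v + b) := by
    rw [hnum]; field_simp; ring
  have hu : -b < a + Δ * k := by
    have := mul_nonneg h1 hk0.le
    rw [add_mul, div_mul_cancel₀ _ hk0.ne'] at this
    linarith
  have hv : -b < v := by
    have : 0 < (k - 1) / k * v := by rw [← hnum]; linarith
    linarith [pos_of_mul_pos_right this hw.le]
  have huv : a + Δ * k ≠ v := by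
    have : a + Δ * k - v = Δ * (k * k / (k - 1)) := by rw [hv_def]; field_simp; ring
    rw [← sub_ne_zero, this]
    exact mul_ne_zero hΔ (by positivity)
  have hmean : 1 / k * (a + Δ * k) + (k - 1) / k * v = a := by
    rw [← hnum]; field_simp; ring
  have jensen := (strictConcaveOn_div_add_const hb).2 hu hv huv (one_div_pos.2 hk0) hw
    (by field_simp; ring)
  simp only [smul_eq_mul, hmean] at jensen
  rw [hden, hnum, mul_div_mul_left _ _ hw.ne']
  linarith

theorem stmt_17 (a b k Δ : ℝ) (ha : 0 < a) (hb : 0 < b) (hk : 1 < k)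
    (hΔ : Δ ≠ 0) (h1 : 0 ≤ a / k + Δ) (h2 : a / k + Δ < a) :
    (a + Δ * k) / (a + Δ * k + b) * (1 / k) +
        (k - 1) / k * ((a - a / k - Δ) / (a - a / k - Δ + b - b / k)) <
      a / (a + b) :=
  stmt_17_general a b k Δ hb hk hΔ h1 h2
end
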